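/- arXiv:math/9806088 — 3 statements merged into one kernel-verified Lean document; each statement's English description precedes it below -/
import Mathlib

section
/- Let K be a field, a, b positive integers, A a b×a matrix and M an a×b matrix over K with I_a − M·A invertible. For X = [[I_a],[0]], Y = [[I_a],[A]], U = [I_a, 0], V = [I_a, −M] and W = X·(U·X)⁻¹·(U·Y)·(V·Y)⁻¹·V, the trace of W satisfies: trace W = a + trace(M·A) + trace((M·A)²·(I_a − M·A)⁻¹). In particular, up to terms of order higher than two in the entries of A and M, trace W = a + trace(M·A), i.e. the quadratic form g = ω_i^α ω_α^i is the second-order principal part of trace W − (m+1) (this is the algebraic content of Theorem 1). -/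
/-!
With `X = [[I],[0]]`, `Y = [[I],[A]]`, `U = [I, 0]`, `V = [I, -M]` one has
`UX = UY = VX = I` and `VY = I - MA`, so by cyclicity of the trace
`trace W = trace ((VX)(UX)⁻¹(UY)(VY)⁻¹) = trace ((I - MA)⁻¹)`.
The Neumann expansion with remainder `(I - N)⁻¹ = I + N + N² (I - N)⁻¹` finishes the proof.
-/

open Matrix

namespace Matrix

variable {m n R : Type*} [Fintype m] [Fintype n] [DecidableEq n] [CommRing R]

theorem trace_mul_inv_mul_mul_inv_mul (X Y : Matrix m n R) (U V : Matrix n m R) :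
    trace (X * (U * X)⁻¹ * (U * Y) * (V * Y)⁻¹ * V) =
      trace (V * X * (U * X)⁻¹ * (U * Y) * (V * Y)⁻¹) := by
  rw [trace_mul_comm]
  simp only [Matrix.mul_assoc]

/- The ascriptions make `*` the `Matrix` product; otherwise it elaborates to the `CStarMatrix`
instance, which `rw` and `simp` do not match against the goal. -/
theorem fromCols_one_neg_mul_fromRows_one (M : Matrix n m R) (A : Matrix m n R) :
    (fromCols 1 (-M) : Matrix n (n ⊕ m) R) * (fromRows 1 A : Matrix (n ⊕ m) n R) = 1 - M * A :=
  (fromCols_mul_fromRows _ _ _ _).trans (by rw [Matrix.one_mul, Matrix.neg_mul, sub_eq_add_neg])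

theorem inv_one_sub_eq_one_add_add_sq_mul_inv {N : Matrix n n R} (h : IsUnit (1 - N)) :
    (1 - N)⁻¹ = 1 + N + N ^ 2 * (1 - N)⁻¹ := by
  have hinv : (1 - N) * (1 - N)⁻¹ = 1 := mul_nonsing_inv _ ((isUnit_iff_isUnit_det _).mp h)
  calc (1 - N)⁻¹ = ((1 + N) * (1 - N) + N ^ 2) * (1 - N)⁻¹ := by noncomm_ring
    _ = (1 + N) * ((1 - N) * (1 - N)⁻¹) + N ^ 2 * (1 - N)⁻¹ := by
        rw [Matrix.add_mul, Matrix.mul_assoc]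
    _ = 1 + N + N ^ 2 * (1 - N)⁻¹ := by rw [hinv, Matrix.mul_one]

theorem trace_inv_one_sub {N : Matrix n n R} (h : IsUnit (1 - N)) :
    trace (1 - N)⁻¹ = Fintype.card n + trace N + trace (N ^ 2 * (1 - N)⁻¹) := by
  conv_lhs => rw [inv_one_sub_eq_one_add_add_sq_mul_inv h]
  rw [trace_add, trace_add, trace_one]

end Matrix

theorem trace_cross_ratio_general (K : Type*) [Field K] (a b : ℕ)
    (A : Matrix (Fin b) (Fin a) K) (M : Matrix (Fin a) (Fin b) K)
    (h : IsUnit (1 - M * A)) :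
    letI X : Matrix (Fin a ⊕ Fin b) (Fin a) K := Matrix.fromRows 1 0
    letI Y : Matrix (Fin a ⊕ Fin b) (Fin a) K := Matrix.fromRows 1 A
    letI U : Matrix (Fin a) (Fin a ⊕ Fin b) K := Matrix.fromCols 1 0
    letI V : Matrix (Fin a) (Fin a ⊕ Fin b) K := Matrix.fromCols 1 (-M)
    Matrix.trace (X * (U * X)⁻¹ * (U * Y) * (V * Y)⁻¹ * V) =
      (a : K) + Matrix.trace (M * A) + Matrix.trace ((M * A) ^ 2 * (1 - M * A)⁻¹) := by
  have hUX := fromCols_one_neg_mul_fromRows_one (0 : Matrix (Fin a) (Fin b) K) 0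
  have hUY := fromCols_one_neg_mul_fromRows_one (0 : Matrix (Fin a) (Fin b) K) A
  have hVX := fromCols_one_neg_mul_fromRows_one M 0
  rw [neg_zero, Matrix.zero_mul, sub_zero] at hUX hUY
  rw [Matrix.mul_zero, sub_zero] at hVX
  rw [trace_mul_inv_mul_mul_inv_mul]
  simp only [hUX, hUY, hVX, fromCols_one_neg_mul_fromRows_one, inv_one, Matrix.mul_one,
    Matrix.one_mul]
  rw [trace_inv_one_sub h, Fintype.card_fin]

/-- For the cross-ratio `W = X (UX)⁻¹ (UY) (VY)⁻¹ V` with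
`X = [[I],[0]]`, `Y = [[I],[A]]`, `U = [I, 0]`, `V = [I, -M]` and `I - MA` invertible,
`trace W = a + trace (MA) + trace ((MA)² (I - MA)⁻¹)`; the first two terms give the
principal part up to second order, so the quadratic form `g = trace (MA)` is the
second-order principal part of `trace W - (m+1)` (Theorem 1). -/
theorem trace_cross_ratio (K : Type*) [Field K] (a b : ℕ) (ha : 0 < a) (hb : 0 < b)
    (A : Matrix (Fin b) (Fin a) K) (M : Matrix (Fin a) (Fin b) K)
    (h : IsUnit (1 - M * A)) :
    letI X : Matrix (Fin a ⊕ Fin b) (Fin a) K := Matrix.fromRows 1 0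
    letI Y : Matrix (Fin a ⊕ Fin b) (Fin a) K := Matrix.fromRows 1 A
    letI U : Matrix (Fin a) (Fin a ⊕ Fin b) K := Matrix.fromCols 1 0
    letI V : Matrix (Fin a) (Fin a ⊕ Fin b) K := Matrix.fromCols 1 (-M)
    Matrix.trace (X * (U * X)⁻¹ * (U * Y) * (V * Y)⁻¹ * V) =
      (a : K) + Matrix.trace (M * A) + Matrix.trace ((M * A) ^ 2 * (1 - M * A)⁻¹) :=
  trace_cross_ratio_general K a b A M h
end

section
/- Let G be an invertible symmetric p×p real matrix with entries g_{αβ} and inverse entries g^{αβ}, and H a symmetric q×q real matrix with entries g_{ij}, with inverse entries g^{ij}. Let λ^{αβ}_{ij} = −g^{αβ}·g_{ij}, and let R^{iβγε}_{αjkl} = ½(δ^β_α δ^i_k λ^{γε}_{jl} + δ^γ_α δ^i_j λ^{βε}_{kl} − δ^β_α δ^i_l λ^{εγ}_{jk} − δ^ε_α δ^i_j λ^{βγ}_{lk}) be the associated curvature tensor. Then the fully raised/lowered tensor R^{αβγε}_{ijkl} = Σ_{α',i'} g^{αα'} g_{ii'} R^{i'βγε}_{α'jkl} equals ½( g^{αβ}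 g^{γε}(g_{il} g_{jk} − g_{ik} g_{jl}) + (g^{αε} g^{βγ} − g^{αγ} g^{βε}) g_{ij} g_{kl} ). (Formula (26): the curvature tensor of a polar-normalized Grassmann manifold.) -/
/-- Kronecker delta on `Fin n`, valued in `ℝ`. -/
noncomputable def kdelta {n : ℕ} (x y : Fin n) : ℝ := if x = y then 1 else 0

/-- formula (26). For the polar normalization with fundamental tensor
`λ^{αβ}_{ij} = −g^{αβ} g_{ij}` (where `g^{αβ}` are the entries of `G⁻¹`, `G = (g_{αβ})`
invertible symmetric, and `H = (g_{ij})` invertible symmetric), raising/lowering the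
first pair of indices of the curvature tensor
`R^{iβγε}_{αjkl} = ½(δ^β_α δ^i_k λ^{γε}_{jl} + δ^γ_α δ^i_j λ^{βε}_{kl}
  − δ^β_α δ^i_l λ^{εγ}_{jk} − δ^ε_α δ^i_j λ^{βγ}_{lk})`
via `R^{αβγε}_{ijkl} = Σ_{α',i'} g^{αα'} g_{ii'} R^{i'βγε}_{α'jkl}` yields
`½( g^{αβ} g^{γε}(g_{il} g_{jk} − g_{ik} g_{jl})
   + (g^{αε} g^{βγ} − g^{αγ} g^{βε}) g_{ij} g_{kl} )`.
Here `lam i j α β` denotes `λ_{ij}^{αβ}` and `R i j k l α β γ ε` denotes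
`R^{iβγε}_{αjkl}` (Latin indices first). -/
theorem polar_curvature_tensor (p q : ℕ) (hp : 0 < p) (hq : 0 < q)
    (G : Matrix (Fin p) (Fin p) ℝ) (H : Matrix (Fin q) (Fin q) ℝ)
    (hG : IsUnit G.det) (hGs : G.IsSymm) (hH : IsUnit H.det) (hHs : H.IsSymm)
    (lam : Fin q → Fin q → Fin p → Fin p → ℝ)
    (hlam : ∀ (i j : Fin q) (α β : Fin p), lam i j α β = -(G⁻¹ α β * H i j))
    (R : Fin q → Fin q → Fin q → Fin q → Fin p → Fin p → Fin p → Fin p → ℝ)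
    (hR : ∀ (i j k l : Fin q) (α β γ ε : Fin p),
      R i j k l α β γ ε =
        (1 / 2 : ℝ) *
          (kdelta α β * kdelta i k * lam j l γ ε + kdelta α γ * kdelta i j * lam k l β ε -
           kdelta α β * kdelta i l * lam j k ε γ - kdelta α ε * kdelta i j * lam l k β γ)) :
    ∀ (i j k l : Fin q) (α β γ ε : Fin p),
      (∑ α' : Fin p, ∑ i' : Fin q, G⁻¹ α α' * H i i' * R i' j k l α' β γ ε) =
        (1 / 2 : ℝ) *
          (G⁻¹ α β * G⁻¹ γ ε * (H i l * H j k - H i k * H j l) +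
           (G⁻¹ α ε * G⁻¹ β γ - G⁻¹ α γ * G⁻¹ β ε) * H i j * H k l) := by
  intro i j k l α β γ ε
  have hGi : Matrix.IsSymm G⁻¹ := by rw [Matrix.IsSymm, Matrix.transpose_nonsing_inv, hGs.eq]
  have hG' : ∀ a b, G⁻¹ a b = G⁻¹ b a := fun a b => (hGi.apply a b).symm
  have hH' : ∀ a b, H a b = H b a := fun a b => (hHs.apply a b).symm
  simp only [hR, hlam, kdelta]
  simp only [mul_ite, ite_mul, mul_zero, zero_mul, mul_one, one_mul, mul_sub, mul_add,
    Finset.sum_add_distrib, Finset.sum_sub_distrib, Finset.mul_sum, Finset.sum_ite_eq,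
    Finset.sum_ite_eq', Finset.mem_univ, if_true, mul_neg, neg_mul, Finset.sum_neg_distrib]
  rw [hG' α β, hG' α γ, hG' α ε, hG' ε γ, hH' l k]
  ring
end

section
/- Let p, q be positive integers, n = p + q − 1, let G be a symmetric p×p real matrix with entries g^{βγ} and H a symmetric q×q real matrix with entries g_{jk}, and set λ^{βγ}_{jk} = −g^{βγ}·g_{jk}. Then the Ricci tensor R^{βγ}_{jk} = ½(λ^{γβ}_{jk} + λ^{βγ}_{kj} − (n+1)·λ^{βγ}_{jk}) equals ½(n−1)·g^{βγ}·g_{jk}, i.e. the Ricci tensor of a polar-normalized domain is proportional to its metric tensor, so the polar-normalized Grassmann manifold is an Einstein space. -/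
/-- For the polar normalization with fundamental tensor
`λ^{βγ}_{jk} = −g^{βγ} g_{jk}` (`G = (g^{βγ})` and `H = (g_{jk})` symmetric), the Ricci
tensor `R^{βγ}_{jk} = ½(λ^{γβ}_{jk} + λ^{βγ}_{kj} − (n+1) λ^{βγ}_{jk})` (with
`n = p + q − 1`) equals `½(n−1) g^{βγ} g_{jk}`, i.e. the Ricci tensor is proportional to
the metric tensor: the polar-normalized Grassmann manifold is an Einstein space.
Here `lam j k β γ` denotes `λ_{jk}^{βγ}` (lower indices first). -/
theorem polar_normalization_einstein (p q n : ℕ) (hp : 0 < p) (hq : 0 < q)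
    (hn : n = p + q - 1)
    (G : Matrix (Fin p) (Fin p) ℝ) (H : Matrix (Fin q) (Fin q) ℝ)
    (hGs : G.IsSymm) (hHs : H.IsSymm)
    (lam : Fin q → Fin q → Fin p → Fin p → ℝ)
    (hlam : ∀ (j k : Fin q) (β γ : Fin p), lam j k β γ = -(G β γ * H j k))
    (R : Fin q → Fin q → Fin p → Fin p → ℝ)
    (hR : ∀ (j k : Fin q) (β γ : Fin p),
      R j k β γ =
        (1 / 2 : ℝ) * (lam j k γ β + lam k j β γ - ((n + 1 : ℕ) : ℝ) * lam j k β γ)) :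
    ∀ (j k : Fin q) (β γ : Fin p),
      R j k β γ = (1 / 2 : ℝ) * ((n : ℝ) - 1) * (G β γ * H j k) := by
  intro j k β γ
  have hG : G γ β = G β γ := by rw [← hGs.apply]
  have hH : H k j = H j k := by rw [← hHs.apply]
  rw [hR, hlam, hlam, hlam, hG, hH]
  push_cast
  ring
end
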